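/- arXiv:1504.05272 — 6 statements merged into one kernel-verified Lean document; each statement's English description precedes it below -/
import Mathlib

section
/- Let L be a positive divisor of M with radical L* > 2, and let ℓ be the number of distinct prime divisors of L. Then I₁(L,M) = φ(L*)·(M²/L* − (−1)^ℓ·ε)/8, where ε = 1 if M is odd, ε = 2 if M ≡ 2 (mod 4) and L* is even, and ε = 0 otherwise. -/
/-!
Coprimality to `L` only depends on `L* = rad L`, so Möbius inversion over the divisors `d` of the
squarefree number `L*` writes `8 I₁(L,M)` as `∑ μ(d) d (q² - δ(q))` with `q = M/d`, using
`8 ∑_{0<s<q/2} s = q² - δ(q)`, where `δ(q) = 2q` for even `q` and `δ(q) = 1` for odd `q`.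
The main terms add up to `M² ∑ μ(d)/d = M² φ(L*)/L*`. The defect `d δ(M/d)` is `2M` when `2d ∣ M`
and `d` otherwise. Summed against `μ(d)` it gives `∑ μ(d) d = (-1)^ℓ φ(L*)` when `M` is odd, and
vanishes when `2L* ∣ M`. In the remaining case `M ≡ 2 (mod 4)` and `L* = 2n` with `n` odd; the
odd divisors then cancel and the even divisors `2e` give `-2 ∑ μ(e) e = 2 (-1)^ℓ φ(L*)`.
-/

open Finset

/-- `Ik k L M = Σ t^k` over integers `0 < t < M/2` with `gcd(t, L) = 1`. -/
def Ik (k L M : ℕ) : ℕ :=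
  ∑ t ∈ (Finset.range M).filter (fun t => 0 < t ∧ 2 * t < M ∧ Nat.gcd t L = 1), t ^ k

/-- `Jk k L M = Σ u^k` over integers `0 < u < M/2` with `gcd(u, L) = 1` and `u ≡ -M (mod 3)`. -/
def Jk (k L M : ℕ) : ℕ :=
  ∑ t ∈ (Finset.range M).filter
    (fun t => 0 < t ∧ 2 * t < M ∧ Nat.gcd t L = 1 ∧ (t + M) % 3 = 0), t ^ k

/-- The radical of `n`: the product of the distinct prime divisors of `n`. -/
def rad (n : ℕ) : ℕ := ∏ p ∈ n.primeFactors, p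

open ArithmeticFunction UniqueFactorizationMonoid
open scoped ArithmeticFunction.Moebius Nat

theorem rad_eq_radical (n : ℕ) : rad n = radical n := Nat.radical_eq_prod_primeFactors.symm

theorem Nat.coprime_radical_iff {t n : ℕ} (hn : n ≠ 0) : t.Coprime (radical n) ↔ t.Coprime n :=
  ⟨fun h => (h.pow_right n).coprime_dvd_right (Nat.dvd_radical_pow_self hn),
    fun h => h.coprime_dvd_right radical_dvd_self⟩

section Moebius

variable {R : Type*}

theorem sum_divisors_moebius [Ring R] (n : ℕ) :
    ∑ d ∈ n.divisors, (μ d : R) = if n = 1 then 1 else 0 := by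
  have h := congrArg (· n) (coe_moebius_mul_coe_zeta (R := R))
  simpa only [coe_mul_zeta_apply, one_apply, intCoe_apply] using h

theorem sum_divisors_filter_dvd_moebius [Ring R] {N : ℕ} (hN : N ≠ 0) (t : ℕ) :
    ∑ d ∈ N.divisors with d ∣ t, (μ d : R) = if t.Coprime N then 1 else 0 := by
  have hdiv : {d ∈ N.divisors | d ∣ t} = (t.gcd N).divisors := by
    rw [← Nat.divisors_filter_dvd_of_dvd hN (Nat.gcd_dvd_right t N)]
    exact filter_congr fun d hd => by simp [Nat.dvd_gcd_iff, Nat.dvd_of_mem_divisors hd]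
  rw [hdiv, sum_divisors_moebius]

theorem sum_filter_coprime_eq_sum_moebius [CommRing R] {N : ℕ} (hN : N ≠ 0)
    (s : Finset ℕ) (f : ℕ → R) :
    ∑ t ∈ s with t.Coprime N, f t = ∑ d ∈ N.divisors, (μ d : R) * ∑ t ∈ s with d ∣ t, f t := by
  simp_rw [sum_filter, mul_sum]
  rw [sum_comm]
  refine sum_congr rfl fun t _ => ?_
  rw [← boole_mul, ← sum_divisors_filter_dvd_moebius hN t, sum_filter, sum_mul]
  exact sum_congr rfl fun d _ => by split_ifs <;> simp

theorem sum_divisors_moebius_mul_div [Ring R] (n : ℕ) :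
    ∑ d ∈ n.divisors, (μ d : R) * (n / d : ℕ) = φ n := by
  rcases n.eq_zero_or_pos with rfl | hn
  · simp
  rw [← Nat.sum_divisorsAntidiagonal (fun d e => (μ d : R) * (e : R))]
  refine (sum_eq_iff_sum_mul_moebius_eq (f := fun n => (φ n : R)) (g := fun n => (n : R))).mp
    (fun n _ => ?_) n hn
  rw [← Nat.cast_sum, Nat.sum_totient]

theorem sum_divisors_moebius_div {K : Type*} [Field K] [CharZero K] {n : ℕ} (hn : n ≠ 0) :
    ∑ d ∈ n.divisors, (μ d : K) / d = φ n / n := by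
  rw [eq_div_iff (by exact_mod_cast hn), sum_mul, ← sum_divisors_moebius_mul_div]
  refine sum_congr rfl fun d hd => ?_
  have hd0 : (d : K) ≠ 0 := by exact_mod_cast (Nat.pos_of_mem_divisors hd).ne'
  rw [Nat.cast_div (Nat.dvd_of_mem_divisors hd) hd0]
  field_simp

theorem Squarefree.sum_divisors_moebius_mul_self [CommRing R] {n : ℕ} (hn : Squarefree n) :
    ∑ d ∈ n.divisors, (μ d : R) * d = (-1) ^ #n.primeFactors * φ n := by
  have h := isMultiplicative_id.natCast.prodPrimeFactors_one_sub_of_squarefree (R := R) _ hn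
  simp only [natCoe_apply, id_apply] at h
  rw [← h, Nat.totient_eq_prod_factorization hn.ne_zero, Finsupp.prod, Nat.support_factorization,
    Nat.cast_prod, ← prod_const, ← prod_mul_distrib]
  refine prod_congr rfl fun p hp => ?_
  have hp1 := (Nat.prime_of_mem_primeFactors hp).one_le
  rw [Nat.factorization_eq_one_of_squarefree hn (Nat.prime_of_mem_primeFactors hp)
    (Nat.dvd_of_mem_primeFactors hp)]
  push_cast [hp1]
  ring

end Moebius

theorem Nat.Coprime.sum_divisors_prime_mul {M : Type*} [AddCommMonoid M] {p n : ℕ}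
    (hp : p.Prime) (hpn : p.Coprime n) (f : ℕ → M) :
    ∑ d ∈ (p * n).divisors, f d = ∑ d ∈ n.divisors, (f d + f (p * d)) := by
  rw [hpn.divisors_mul, sum_map]
  refine (sum_attach (p.divisors ×ˢ n.divisors) (fun q => f (q.1 * q.2))).trans ?_
  rw [sum_product_right, hp.divisors]
  refine sum_congr rfl fun d _ => ?_
  rw [sum_pair hp.one_lt.ne, one_mul]

theorem two_mul_sum_range_cast {R : Type*} [CommRing R] (n : ℕ) :
    2 * ∑ s ∈ range n, (s : R) = n * (n - 1) := by
  induction n with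
  | zero => simp
  | succ n ih => rw [sum_range_succ, mul_add, ih]; push_cast; ring

theorem eight_mul_sum_half (q : ℕ) :
    8 * ∑ s ∈ range q with 0 < s ∧ 2 * s < q, (s : ℚ) =
      q ^ 2 - if Even q then 2 * (q : ℚ) else 1 := by
  have hhalf : ∑ s ∈ range q with 0 < s ∧ 2 * s < q, (s : ℚ) =
      ∑ s ∈ range ((q + 1) / 2), (s : ℚ) :=
    sum_subset (fun s hs => by simp only [mem_filter, mem_range] at hs ⊢; omega)
      fun s hs hs' => by simp only [mem_filter, mem_range] at hs hs'; simp [show s = 0 by omega]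
  rw [hhalf, show (8 : ℚ) = 4 * 2 by norm_num, mul_assoc, two_mul_sum_range_cast]
  obtain ⟨m, rfl | rfl⟩ := Nat.even_or_odd' q
  · rw [if_pos (even_two_mul m), show (2 * m + 1) / 2 = m by omega]
    push_cast; ring
  · rw [if_neg (Nat.not_even_iff_odd.mpr (odd_two_mul_add_one m)),
      show (2 * m + 1 + 1) / 2 = m + 1 by omega]
    push_cast; ring

theorem sum_filter_dvd_eq_mul_sum {d m : ℕ} (hd : 0 < d) :
    ∑ t ∈ range (d * m) with (0 < t ∧ 2 * t < d * m) ∧ d ∣ t, (t : ℚ) =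
      d * ∑ s ∈ range m with 0 < s ∧ 2 * s < m, (s : ℚ) := by
  rw [mul_sum]
  refine sum_nbij' (· / d) (d * ·) ?_ ?_ ?_ ?_ ?_
  · rintro _ ht
    simp only [mem_filter, mem_range] at ht ⊢
    obtain ⟨-, ⟨ht0, ht2⟩, k, rfl⟩ := ht
    rw [Nat.mul_div_cancel_left k hd]
    refine ⟨?_, ?_, ?_⟩ <;> nlinarith
  · intro s hs
    simp only [mem_filter, mem_range] at hs ⊢
    refine ⟨?_, ⟨?_, ?_⟩, dvd_mul_right d s⟩ <;> nlinarith
  · rintro _ ht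
    obtain ⟨k, rfl⟩ := (mem_filter.mp ht).2.2
    rw [Nat.mul_div_cancel_left k hd]
  · intro s _
    exact Nat.mul_div_cancel_left s hd
  · rintro _ ht
    obtain ⟨k, rfl⟩ := (mem_filter.mp ht).2.2
    rw [Nat.mul_div_cancel_left k hd]
    push_cast; rfl

/-- The defect `d δ(M / d)`, for `d ∣ M`. -/
def halfSumDefect (M d : ℕ) : ℚ := if 2 * d ∣ M then 2 * M else d

theorem eight_mul_sum_filter_dvd {d M : ℕ} (hd : 0 < d) (hdM : d ∣ M) :
    8 * ∑ t ∈ range M with (0 < t ∧ 2 * t < M) ∧ d ∣ t, (t : ℚ) =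
      M ^ 2 / d - halfSumDefect M d := by
  obtain ⟨m, rfl⟩ := hdM
  have hpar : 2 * d ∣ d * m ↔ Even m := by
    rw [mul_comm 2 d, Nat.mul_dvd_mul_iff_left hd, even_iff_two_dvd]
  rw [sum_filter_dvd_eq_mul_sum hd, mul_left_comm, eight_mul_sum_half, halfSumDefect,
    if_congr hpar rfl rfl]
  split_ifs <;> · push_cast; field_simp

theorem sum_divisors_moebius_mul_halfSumDefect_of_odd {N M : ℕ} (hN : Squarefree N)
    (hM : Odd M) :
    ∑ d ∈ N.divisors, (μ d : ℚ) * halfSumDefect M d = (-1) ^ #N.primeFactors * φ N := by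
  rw [← hN.sum_divisors_moebius_mul_self]
  refine sum_congr rfl fun d _ => ?_
  rw [halfSumDefect, if_neg fun h => hM.not_two_dvd_nat (dvd_of_mul_right_dvd h)]

theorem sum_divisors_moebius_mul_halfSumDefect_of_two_mul_dvd {N M : ℕ} (hN : N ≠ 1)
    (hNM : 2 * N ∣ M) :
    ∑ d ∈ N.divisors, (μ d : ℚ) * halfSumDefect M d = 0 := by
  have hdM (d) (hd : d ∈ N.divisors) : 2 * d ∣ M :=
    (mul_dvd_mul_left 2 (Nat.dvd_of_mem_divisors hd)).trans hNM
  rw [sum_congr rfl fun d hd => by rw [halfSumDefect, if_pos (hdM d hd)], ← sum_mul,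
    sum_divisors_moebius, if_neg hN, zero_mul]

theorem sum_divisors_moebius_mul_halfSumDefect_of_mod_four_eq_two {n M : ℕ}
    (hn : Squarefree (2 * n)) (hn1 : n ≠ 1) (hnM : 2 * n ∣ M) (hM : M % 4 = 2) :
    ∑ d ∈ (2 * n).divisors, (μ d : ℚ) * halfSumDefect M d =
      2 * ((-1) ^ #(2 * n).primeFactors * φ (2 * n)) := by
  have h2n : Nat.Coprime 2 n := Nat.coprime_of_squarefree_mul hn
  have hterm (e) (he : e ∈ n.divisors) :
      (μ e : ℚ) * halfSumDefect M e + μ (2 * e) * halfSumDefect M (2 * e) =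
        2 * M * μ e - 2 * (μ e * e) := by
    have h2e : Nat.Coprime 2 e := h2n.coprime_dvd_right (Nat.dvd_of_mem_divisors he)
    have heM : 2 * e ∣ M := h2e.mul_dvd_of_dvd_of_dvd (by omega)
      ((Nat.dvd_of_mem_divisors he).trans (dvd_of_mul_left_dvd hnM))
    have h4eM : ¬ 2 * (2 * e) ∣ M := fun h => by
      have := dvd_of_mul_right_dvd (mul_assoc 2 2 e ▸ h); omega
    rw [halfSumDefect, halfSumDefect, if_pos heM, if_neg h4eM,
      isMultiplicative_moebius.map_mul_of_coprime h2e, moebius_apply_prime Nat.prime_two]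
    push_cast; ring
  rw [h2n.sum_divisors_prime_mul Nat.prime_two, sum_congr rfl hterm, sum_sub_distrib, ← mul_sum,
    ← mul_sum, sum_divisors_moebius, if_neg hn1, hn.of_mul_right.sum_divisors_moebius_mul_self,
    h2n.primeFactors_mul, card_union_of_disjoint h2n.disjoint_primeFactors,
    Nat.prime_two.primeFactors, card_singleton, Nat.totient_mul h2n, Nat.totient_two]
  push_cast; ring

theorem sum_divisors_moebius_mul_halfSumDefect {N M : ℕ} (hN : Squarefree N) (hN2 : 2 < N)
    (hNM : N ∣ M) :
    ∑ d ∈ N.divisors, (μ d : ℚ) * halfSumDefect M d =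
      (-1) ^ #N.primeFactors * φ N *
        (if Odd M then 1 else if M % 4 = 2 ∧ 2 ∣ N then 2 else 0) := by
  by_cases hM : Odd M
  · rw [sum_divisors_moebius_mul_halfSumDefect_of_odd hN hM, if_pos hM, mul_one]
  rw [if_neg hM]
  have hM2 : 2 ∣ M := even_iff_two_dvd.mp (Nat.not_odd_iff_even.mp hM)
  by_cases h2NM : 2 * N ∣ M
  · rw [sum_divisors_moebius_mul_halfSumDefect_of_two_mul_dvd (by omega) h2NM, if_neg, mul_zero]
    rintro ⟨hM4, n, rfl⟩
    have : 4 ∣ M := dvd_trans ⟨n, by ring⟩ h2NM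
    omega
  obtain ⟨n, rfl⟩ : 2 ∣ N := by
    by_contra h
    exact h2NM ((Nat.prime_two.coprime_iff_not_dvd.mpr h).mul_dvd_of_dvd_of_dvd hM2 hNM)
  have hM4 : M % 4 = 2 := by
    by_contra h
    refine h2NM ?_
    rw [← mul_assoc]
    exact (Nat.Coprime.pow_left 2 (Nat.coprime_of_squarefree_mul hN)).mul_dvd_of_dvd_of_dvd
      (by omega) (dvd_of_mul_left_dvd hNM)
  rw [sum_divisors_moebius_mul_halfSumDefect_of_mod_four_eq_two hN (by omega) hNM hM4,
    if_pos ⟨hM4, dvd_mul_right 2 n⟩]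
  ring

theorem stmt_2 (L M : ℕ) (hL : 0 < L) (hLM : L ∣ M) (hrad : 2 < rad L) :
    (Ik 1 L M : ℚ) =
      (Nat.totient (rad L) : ℚ) *
        ((M : ℚ) ^ 2 / (rad L : ℚ) -
          (-1 : ℚ) ^ (L.primeFactors.card) *
            (if Odd M then 1 else if M % 4 = 2 ∧ 2 ∣ rad L then 2 else 0)) / 8 := by
  rw [rad_eq_radical] at hrad ⊢
  rw [← Nat.primeFactors_radical L]
  set N := radical L
  have hNM : N ∣ M := radical_dvd_self.trans hLM
  have hIk : (Ik 1 L M : ℚ) = ∑ t ∈ range M with (0 < t ∧ 2 * t < M) ∧ t.Coprime N, (t : ℚ) := by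
    rw [Ik, Nat.cast_sum]
    refine sum_congr (filter_congr fun t _ => ?_) fun t _ => by rw [pow_one]
    rw [Nat.coprime_radical_iff hL.ne', and_assoc]
  have h8 : 8 * (Ik 1 L M : ℚ) =
      M ^ 2 * (φ N / N) - ∑ d ∈ N.divisors, (μ d : ℚ) * halfSumDefect M d := by
    rw [hIk, ← filter_filter, sum_filter_coprime_eq_sum_moebius (by omega), mul_sum,
      ← sum_divisors_moebius_div (by omega), mul_sum, ← sum_sub_distrib]
    refine sum_congr rfl fun d hd => ?_
    rw [filter_filter, mul_left_comm,
      eight_mul_sum_filter_dvd (Nat.pos_of_mem_divisors hd) ((Nat.dvd_of_mem_divisors hd).trans hNM)]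
    ring
  rw [sum_divisors_moebius_mul_halfSumDefect squarefree_radical hrad hNM] at h8
  linear_combination h8 / 8
end

section
/- Let M ≢ 0 (mod 3) and let L be a positive divisor of M with radical L* = 2. Then J₁(L,M) = (M² − 12M + 20)/48 if M ≡ 2 (mod 4) [note: stated for M with L even] and (M² − 16)/48 if M ≡ 0 (mod 4). -/
/-!
Since `rad L = 2`, being coprime to `L` means being odd, and together with `u ≡ -M (mod 3)` this
singles out one residue class `r ∈ {1, 5}` modulo 6, fixed by `M mod 6`. So `J₁(L, M)` is the sum of
an arithmetic progression `r, r + 6, …` below `M / 2`, whose length depends on `M mod 12`.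
-/

open Finset

theorem coprime_rad_iff {t n : ℕ} (hn : n ≠ 0) : t.Coprime (rad n) ↔ t.Coprime n := by
  refine ⟨fun h => Nat.coprime_of_dvd fun p hp hpt hpn => ?_,
    fun h => h.coprime_dvd_right (Nat.prod_primeFactors_dvd n)⟩
  have hp_rad : p ∣ rad n := dvd_prod_of_mem _ (Nat.mem_primeFactors.mpr ⟨hp, hpn, hn⟩)
  exact hp.ne_one ((h.coprime_dvd_left hpt).eq_one_of_dvd hp_rad)

theorem Nat.cast_sum_range_add_mul (n r d : ℕ) :
    ((∑ j ∈ range n, (r + d * j) : ℕ) : ℚ) = n * r + d * n * (n - 1) / 2 := by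
  induction n with
  | zero => simp
  | succ n ih =>
    rw [sum_range_succ, Nat.cast_add, ih]
    push_cast
    ring

theorem Jk_one_eq_sum_range {L M : ℕ} (hodd : ∀ t, Nat.gcd t L = 1 ↔ t % 2 = 1) {r n : ℕ}
    (hr : r < 6)
    (hprog : ∀ t, (0 < t ∧ 2 * t < M ∧ t % 2 = 1 ∧ (t + M) % 3 = 0) ↔ t % 6 = r ∧ t < r + 6 * n) :
    Jk 1 L M = ∑ j ∈ range n, (r + 6 * j) := by
  have hset : (range M).filter
      (fun t => 0 < t ∧ 2 * t < M ∧ Nat.gcd t L = 1 ∧ (t + M) % 3 = 0)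
      = (range n).image (fun j => r + 6 * j) := by
    ext t
    simp only [mem_filter, mem_range, mem_image, hodd]
    have ht := hprog t
    constructor
    · intro h
      exact ⟨t / 6, by omega, by omega⟩
    · rintro ⟨j, hj, rfl⟩
      omega
  simp only [Jk, hset, pow_one]
  exact sum_image fun x _ y _ h => by omega

theorem Jk_one_eq_of_gcd_eq_one_iff_odd {L M : ℕ} (hodd : ∀ t, Nat.gcd t L = 1 ↔ t % 2 = 1)
    (hM2 : 2 ∣ M) (hM3 : ¬ 3 ∣ M) :
    (Jk 1 L M : ℚ) =
      if M % 4 = 2 then ((M : ℚ) ^ 2 - 12 * (M : ℚ) + 20) / 48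
      else ((M : ℚ) ^ 2 - 16) / 48 := by
  obtain ⟨k, rfl | rfl | rfl | rfl⟩ : ∃ k, M = 12 * k + 2 ∨ M = 12 * k + 4 ∨
      M = 12 * k + 8 ∨ M = 12 * k + 10 := ⟨M / 12, by omega⟩
  · rw [Jk_one_eq_sum_range hodd (r := 1) (n := k) (by norm_num) (fun t => by omega),
      Nat.cast_sum_range_add_mul, if_pos (by omega)]
    push_cast; ring
  · rw [Jk_one_eq_sum_range hodd (r := 5) (n := k) (by norm_num) (fun t => by omega),
      Nat.cast_sum_range_add_mul, if_neg (by omega)]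
    push_cast; ring
  · rw [Jk_one_eq_sum_range hodd (r := 1) (n := k + 1) (by norm_num) (fun t => by omega),
      Nat.cast_sum_range_add_mul, if_neg (by omega)]
    push_cast; ring
  · rw [Jk_one_eq_sum_range hodd (r := 5) (n := k) (by norm_num) (fun t => by omega),
      Nat.cast_sum_range_add_mul, if_pos (by omega)]
    push_cast; ring

theorem stmt_7_general (L M : ℕ) (hLM : L ∣ M) (hM3 : ¬ (3 ∣ M))
    (hrad : rad L = 2) :
    (Jk 1 L M : ℚ) =
      if M % 4 = 2 then ((M : ℚ) ^ 2 - 12 * (M : ℚ) + 20) / 48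
      else ((M : ℚ) ^ 2 - 16) / 48 := by
  have hL : L ≠ 0 := by
    rintro rfl
    simp [rad] at hrad
  have hodd (t : ℕ) : Nat.gcd t L = 1 ↔ t % 2 = 1 := by
    rw [← Nat.coprime_iff_gcd_eq_one, ← coprime_rad_iff hL, hrad, Nat.coprime_two_right,
      Nat.odd_iff]
  have h2L : 2 ∣ L := hrad ▸ Nat.prod_primeFactors_dvd L
  exact Jk_one_eq_of_gcd_eq_one_iff_odd hodd (h2L.trans hLM) hM3

theorem stmt_7 (L M : ℕ) (hL : 0 < L) (hLM : L ∣ M) (hM3 : ¬ (3 ∣ M))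
    (hrad : rad L = 2) :
    (Jk 1 L M : ℚ) =
      if M % 4 = 2 then ((M : ℚ) ^ 2 - 12 * (M : ℚ) + 20) / 48
      else ((M : ℚ) ^ 2 - 16) / 48 :=
  stmt_7_general L M hLM hM3 hrad
end

section
/- Let M ≢ 0 (mod 3) and let L be a positive divisor of M with radical L* > 2 and ℓ distinct prime factors. Then J₀(L,M) = (1/6)·(M·φ(L*)/L* − (M/3)·2^ℓ·ε), where (M/3) is the Legendre symbol of M mod 3, and ε = 1 if L* has no prime factor congruent to 1 mod 3, ε = 0 otherwise. -/
open Finset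

/-- The Legendre symbol modulo 3. -/
def legendre3 (n : ℕ) : ℤ :=
  if n % 3 = 0 then 0 else if n % 3 = 1 then 1 else -1

/-!
Let `N(R, M)` count the `0 < t < M` with `gcd(t, R) = 1` and `t ≡ -M (mod 3)`. For a prime
`p ∤ 3R`, the multiples of `p` counted by `N(R, pQ)` are `p` times those counted by `N(R, Q)`, so
`N(R, pQ) = N(pR, pQ) + N(R, Q)`. Induction over the prime factors of `L*`, starting from
`3 N(1, M) = M - (M/3)`, gives `3 N(L*, M) = M φ(L*)/L* - (M/3) 2^ℓ ε`: a prime `p ≡ 1 (mod 3)`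
cancels the Legendre term, a prime `p ≡ 2` doubles it. Since `L ∣ M`, `t ↦ M - t` is an involution
of the counted set whose only possible fixed point `M/2` is not coprime to an odd prime factor of
`L`, and one exists because `L* > 2`; hence `N(L, M) = 2 J₀(L, M)`.
-/

def coprimeCount (R M : ℕ) : ℕ := #{t ∈ Ioo 0 M | Nat.Coprime t R ∧ 3 ∣ t + M}

lemma three_mul_coprimeCount_one {M : ℕ} (hM : ¬ 3 ∣ M) :
    (3 * coprimeCount 1 M : ℤ) = M - legendre3 M := by
  have hclass : {t ∈ Ioo 0 M | Nat.Coprime t 1 ∧ 3 ∣ t + M} =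
      (range ((M + 1) / 3)).image (fun i => 3 - M % 3 + 3 * i) := by
    ext t
    simp only [mem_filter, mem_Ioo, Nat.coprime_one_right_eq_true, true_and, mem_image, mem_range]
    constructor
    · rintro ⟨⟨ht0, htM⟩, h3⟩
      exact ⟨t / 3, by omega, by omega⟩
    · rintro ⟨i, hi, rfl⟩
      omega
  rw [coprimeCount, hclass, card_image_of_injective _ (fun a b h => by omega), card_range,
    legendre3]
  split_ifs <;> omega

lemma coprimeCount_mul_prime {p R Q : ℕ} (hp : p.Prime) (hp3 : ¬ 3 ∣ p)
    (hpR : Nat.Coprime p R) :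
    coprimeCount R (p * Q) = coprimeCount (p * R) (p * Q) + coprimeCount R Q := by
  set S := {t ∈ Ioo 0 (p * Q) | Nat.Coprime t R ∧ 3 ∣ t + p * Q}
  have hcoprime :
      {t ∈ S | ¬ p ∣ t} = {t ∈ Ioo 0 (p * Q) | Nat.Coprime t (p * R) ∧ 3 ∣ t + p * Q} := by
    rw [filter_filter]
    refine filter_congr fun t _ => ?_
    rw [Nat.coprime_mul_iff_right, Nat.coprime_comm.trans hp.coprime_iff_not_dvd]
    tauto
  have hmultiples :
      {t ∈ S | p ∣ t} = {s ∈ Ioo 0 Q | Nat.Coprime s R ∧ 3 ∣ s + Q}.image (p * ·) := by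
    ext t
    simp only [S, mem_filter, mem_Ioo, mem_image]
    constructor
    · rintro ⟨⟨⟨ht0, htQ⟩, htR, h3⟩, s, rfl⟩
      refine ⟨s, ⟨⟨Nat.pos_of_mul_pos_left ht0, Nat.lt_of_mul_lt_mul_left htQ⟩,
        Nat.Coprime.coprime_mul_left htR, ?_⟩, rfl⟩
      rw [← mul_add] at h3
      exact ((Nat.Prime.dvd_mul Nat.prime_three).mp h3).resolve_left hp3
    · rintro ⟨s, ⟨⟨hs0, hsQ⟩, hsR, h3⟩, rfl⟩
      refine ⟨⟨⟨Nat.mul_pos hp.pos hs0, Nat.mul_lt_mul_of_pos_left hsQ hp.pos⟩,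
        Nat.Coprime.mul_left hpR hsR, ?_⟩, dvd_mul_right p s⟩
      rw [← mul_add]
      exact h3.mul_left p
  rw [coprimeCount, ← card_filter_add_card_filter_not (p := (p ∣ ·)), hmultiples, hcoprime,
    card_image_of_injective _ (mul_right_injective₀ hp.ne_zero)]
  exact add_comm _ _

lemma legendre3_mul (a b : ℕ) : legendre3 (a * b) = legendre3 a * legendre3 b := by
  have hmod : a * b % 3 = a % 3 * (b % 3) % 3 := Nat.mul_mod a b 3
  have ha : a % 3 < 3 := Nat.mod_lt a three_pos
  have hb : b % 3 < 3 := Nat.mod_lt b three_pos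
  unfold legendre3
  interval_cases a % 3 <;> interval_cases b % 3 <;> simp_all

lemma three_mul_coprimeCount_prod {s : Finset ℕ} (hs : ∀ p ∈ s, p.Prime) {M : ℕ}
    (hM : ¬ 3 ∣ M) (hsM : ∏ p ∈ s, p ∣ M) :
    (3 * coprimeCount (∏ p ∈ s, p) M : ℚ) =
      M * (∏ p ∈ s, p).totient / ∏ p ∈ s, p -
        legendre3 M * 2 ^ #s * (if ∀ p ∈ s, p % 3 ≠ 1 then 1 else 0) := by
  induction s using Finset.induction_on generalizing M with
  | empty =>
    simpa using congrArg (Int.cast : ℤ → ℚ) (three_mul_coprimeCount_one hM)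
  | insert p s hps ih =>
    rw [forall_mem_insert] at hs
    obtain ⟨hp, hs⟩ := hs
    rw [prod_insert hps] at hsM ⊢
    set R := ∏ q ∈ s, q
    have hpR : Nat.Coprime p R := Nat.Coprime.prod_right fun q hq =>
      (Nat.coprime_primes hp (hs q hq)).mpr (by rintro rfl; exact hps hq)
    obtain ⟨Q, rfl⟩ := dvd_trans (dvd_mul_right p R) hsM
    have hRQ : R ∣ Q := (Nat.mul_dvd_mul_iff_left hp.pos).mp hsM
    have hp3 : ¬ 3 ∣ p := fun h => hM (h.mul_right Q)
    have hQ3 : ¬ 3 ∣ Q := fun h => hM (h.mul_left p)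
    have hsplit := coprimeCount_mul_prime (Q := Q) hp hp3 hpR
    have hR0 : (R : ℚ) ≠ 0 :=
      Nat.cast_ne_zero.mpr (prod_ne_zero_iff.mpr fun q hq => (hs q hq).ne_zero)
    have hp0 : (p : ℚ) ≠ 0 := Nat.cast_ne_zero.mpr hp.ne_zero
    have hε : (if ∀ q ∈ insert p s, q % 3 ≠ 1 then (1 : ℚ) else 0) =
        if p % 3 = 1 then 0 else if ∀ q ∈ s, q % 3 ≠ 1 then 1 else 0 := by
      simp only [forall_mem_insert]
      split_ifs <;> tauto
    have hcount : (3 * coprimeCount (p * R) (p * Q) : ℚ) =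
        3 * coprimeCount R (p * Q) - 3 * coprimeCount R Q := by
      rw [hsplit]; push_cast; ring
    rw [hcount, ih hs hM (dvd_trans (dvd_mul_left R p) hsM), ih hs hQ3 hRQ, hε, legendre3_mul,
      Nat.totient_mul hpR, Nat.totient_prime hp, card_insert_of_notMem hps]
    have hleg : (legendre3 p : ℚ) = if p % 3 = 1 then 1 else -1 := by
      unfold legendre3; rw [if_neg (by omega)]; split_ifs <;> simp
    simp only [Nat.cast_mul, Int.cast_mul, hleg, Nat.cast_sub hp.one_le, Nat.cast_one]
    split_ifs <;> field_simp <;> ring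

lemma coprime_sub_iff_of_dvd {L M t : ℕ} (hLM : L ∣ M) (ht : t ≤ M) :
    Nat.Coprime (M - t) L ↔ Nat.Coprime t L := by
  obtain ⟨k, rfl⟩ := hLM
  rw [← Nat.isCoprime_iff_coprime, ← Nat.isCoprime_iff_coprime, Nat.cast_sub ht, Nat.cast_mul,
    sub_eq_neg_add, IsCoprime.add_mul_left_left_iff, IsCoprime.neg_left_iff]

lemma coprimeCount_eq_two_mul_Jk_zero {L M : ℕ} (hLM : L ∣ M)
    (hmid : ∀ t, 2 * t = M → ¬ Nat.Coprime t L) : coprimeCount L M = 2 * Jk 0 L M := by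
  set S := {t ∈ Ioo 0 M | Nat.Coprime t L ∧ 3 ∣ t + M}
  have hJ : Jk 0 L M = #{t ∈ S | 2 * t < M} := by
    simp only [Jk, pow_zero, sum_const, smul_eq_mul, mul_one, S, filter_filter]
    congr 1
    ext t
    simp only [mem_filter, mem_range, mem_Ioo, Nat.dvd_iff_mod_eq_zero]
    tauto
  have hmirror : #{t ∈ S | ¬ 2 * t < M} = #{t ∈ S | 2 * t < M} := by
    refine card_nbij' (M - ·) (M - ·) ?_ ?_ ?_ ?_ <;> intro t ht <;>
      simp only [S, mem_coe, mem_filter, mem_Ioo] at ht ⊢ <;>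
      obtain ⟨⟨⟨ht0, htM⟩, htL, ht3⟩, ht2⟩ := ht
    · have hmid' : 2 * t ≠ M := fun h => hmid t h htL
      exact ⟨⟨⟨by omega, by omega⟩, (coprime_sub_iff_of_dvd hLM htM.le).mpr htL, by omega⟩,
        by omega⟩
    · exact ⟨⟨⟨by omega, by omega⟩, (coprime_sub_iff_of_dvd hLM htM.le).mpr htL, by omega⟩,
        by omega⟩
    all_goals omega
  rw [coprimeCount, ← card_filter_add_card_filter_not (p := (2 * · < M)), hmirror, hJ]
  ring

lemma coprime_rad_iff_s8 {L : ℕ} (hL : L ≠ 0) (t : ℕ) : Nat.Coprime t (rad L) ↔ Nat.Coprime t L :=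
  ⟨fun h => Nat.coprime_of_dvd fun _ hq hqt hqL => hq.one_lt.ne' <|
      Nat.eq_one_of_dvd_coprimes h hqt <|
        dvd_prod_of_mem _ (Nat.mem_primeFactors.mpr ⟨hq, hqL, hL⟩),
    fun h => h.coprime_dvd_right (Nat.prod_primeFactors_dvd L)⟩

lemma coprimeCount_rad {L : ℕ} (hL : L ≠ 0) (M : ℕ) :
    coprimeCount (rad L) M = coprimeCount L M := by
  simp only [coprimeCount, coprime_rad_iff_s8 hL]

lemma exists_prime_factor_ne_two_of_two_lt_rad {L : ℕ} (hL : 2 < rad L) :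
    ∃ q ∈ L.primeFactors, q ≠ 2 := by
  by_contra! h
  rcases subset_singleton_iff.mp (fun q hq => mem_singleton.mpr (h q hq)) with h' | h' <;>
    simp [rad, h'] at hL

lemma not_coprime_half_of_prime_dvd {L M q : ℕ} (hq : q.Prime) (hq2 : q ≠ 2) (hqL : q ∣ L)
    (hLM : L ∣ M) (t : ℕ) (ht : 2 * t = M) : ¬ Nat.Coprime t L := by
  have hqt : q ∣ t := by
    rcases hq.dvd_mul.mp (ht ▸ hqL.trans hLM) with h | h
    · exact absurd ((Nat.prime_dvd_prime_iff_eq hq Nat.prime_two).mp h) hq2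
    · exact h
  exact Nat.Prime.not_coprime_iff_dvd.mpr ⟨q, hq, hqt, hqL⟩

theorem stmt_8 (L M : ℕ) (hL : 0 < L) (hLM : L ∣ M) (hM3 : ¬ (3 ∣ M))
    (hrad : 2 < rad L) :
    (Jk 0 L M : ℚ) =
      (1 / 6) * ((M : ℚ) * (Nat.totient (rad L) : ℚ) / (rad L : ℚ) -
        (legendre3 M : ℚ) * 2 ^ (L.primeFactors.card) *
          (if ∀ p ∈ L.primeFactors, p % 3 ≠ 1 then (1 : ℚ) else 0)) := by
  obtain ⟨q, hqL, hq2⟩ := exists_prime_factor_ne_two_of_two_lt_rad hrad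
  have hq := Nat.prime_of_mem_primeFactors hqL
  have hcount : coprimeCount (rad L) M = 2 * Jk 0 L M := by
    rw [coprimeCount_rad hL.ne', coprimeCount_eq_two_mul_Jk_zero hLM
      (not_coprime_half_of_prime_dvd hq hq2 (Nat.dvd_of_mem_primeFactors hqL) hLM)]
  have hformula : (3 * coprimeCount (rad L) M : ℚ) = M * (rad L).totient / rad L -
      legendre3 M * 2 ^ #L.primeFactors * (if ∀ p ∈ L.primeFactors, p % 3 ≠ 1 then 1 else 0) :=
    three_mul_coprimeCount_prod (fun p hp => Nat.prime_of_mem_primeFactors hp) hM3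
      ((Nat.prod_primeFactors_dvd L).trans hLM)
  rw [hcount, Nat.cast_mul, Nat.cast_two] at hformula
  linarith
end

section
/- Let N = 2^m with m ≥ 2. Then t_N = (3·2^{2m−3} − 2^{m−1} − (−1)^m)/3 and ℓ_N = (2^{3m−4} − (−1)^m)/3, where t_N = I₀(N,N) + 2·Σ_{0<a<N/3} I₀(gcd(a,N), N−3a) + δ₀(N) and ℓ_N = I₁(N,N) + 2·Σ_{0<a<N/3} I₁(gcd(a,N), N−3a) + δ₁(N), with δ_k(N) = J_k(N,N) since N ≢ 0 (mod 3). -/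
open Finset

/-- The quantity t_N for N not divisible by 3. -/
def tNum (N : ℕ) : ℕ :=
  Ik 0 N N + 2 * ∑ a ∈ (Finset.range N).filter (fun a => 0 < a ∧ 3 * a < N),
    Ik 0 (Nat.gcd a N) (N - 3 * a) + Jk 0 N N

/-- The quantity ℓ_N for N not divisible by 3. -/
def lNum (N : ℕ) : ℕ :=
  Ik 1 N N + 2 * ∑ a ∈ (Finset.range N).filter (fun a => 0 < a ∧ 3 * a < N),
    Ik 1 (Nat.gcd a N) (N - 3 * a) + Jk 1 N N

/-! Dropping the coprimality conditions turns `t_N` and `ℓ_N` into sums `U_k(N)` over the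
lattice triangle `3|a| + 2t < N`, `t > 0`, plus the boundary term `J_k`. For `N = 2^m` the
coprimality conditions remove exactly the points with `a` and `t` both even, and halving those
gives the triangle of `N/2`; hence `t_N = U_0(N) - U_0(N/2)` and `ℓ_N = U_1(N) - 2 U_1(N/2)`.
Replacing `N` by `N + 6` adds two rows to the triangle, which yields, for even `N ≡ ε (mod 3)`
with `ε = ±1`, the closed forms `U_0(N) = (N² - 2N - 1 - ε)/6` and
`U_1(N) = (N³/4 - 3N/2 - ε)/9`. -/

theorem Nat.coprime_iff_coprime_of_dvd_pow {p n d t : ℕ} (hd : d ∣ p ^ n) (hpd : p ∣ d) :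
    Nat.Coprime t d ↔ Nat.Coprime t p :=
  ⟨fun h => h.coprime_dvd_right hpd, fun h => (h.pow_right n).coprime_dvd_right hd⟩

theorem coprime_two_mul_two_pow_iff (p t : ℕ) : Nat.Coprime t (2 * 2 ^ p) ↔ Nat.Coprime t 2 :=
  Nat.coprime_iff_coprime_of_dvd_pow (pow_succ' 2 p).symm.dvd (dvd_mul_right 2 _)

theorem Finset.sum_filter_range_even {β : Type*} [AddCommMonoid β] (M : ℕ) (P : ℕ → Prop)
    [DecidablePred P] (f : ℕ → β) :
    ∑ t ∈ (range M).filter (fun t => P t ∧ 2 ∣ t), f t =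
      ∑ t ∈ (range ((M + 1) / 2)).filter (fun t => P (2 * t)), f (2 * t) := by
  symm
  refine sum_nbij' (2 * ·) (· / 2) ?_ ?_ ?_ ?_ fun _ _ => rfl
  · intro t ht
    simp only [mem_filter, mem_range] at ht ⊢
    exact ⟨by omega, ht.2, dvd_mul_right 2 t⟩
  · intro t ht
    simp only [mem_filter, mem_range] at ht ⊢
    obtain ⟨ht, hP, s, rfl⟩ := ht
    exact ⟨by omega, by rwa [Nat.mul_div_cancel_left s two_pos]⟩
  · intro t _; simp
  · intro t ht
    obtain ⟨s, rfl⟩ := (mem_filter.1 ht).2.2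
    simp

theorem sum_pow_filter_eq_odd_add_even (k h : ℕ) (q : ℕ → Prop) [DecidablePred q] :
    ∑ t ∈ (range (2 * h)).filter (fun t => 0 < t ∧ 2 * t < 2 * h ∧ q t), t ^ k =
      ∑ t ∈ (range (2 * h)).filter (fun t => 0 < t ∧ 2 * t < 2 * h ∧ q t ∧ ¬ 2 ∣ t), t ^ k +
        2 ^ k * ∑ t ∈ (range h).filter (fun t => 0 < t ∧ 2 * t < h ∧ q (2 * t)), t ^ k := by
  rw [← sum_filter_add_sum_filter_not _ (fun t => ¬ 2 ∣ t), filter_filter, filter_filter]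
  congr 1
  · simp only [and_assoc]
  · simp only [not_not]
    rw [sum_filter_range_even, mul_sum, show (2 * h + 1) / 2 = h by omega]
    exact sum_congr (filter_congr fun t _ => and_congr (by omega) (and_congr (by omega) Iff.rfl))
      fun t _ => mul_pow 2 t k

theorem Nat.rec_pos_step_three {P : ℕ → Prop} (h1 : P 1) (h2 : P 2) (h3 : P 3)
    (step : ∀ n, 0 < n → P n → P (n + 3)) : ∀ n, 0 < n → P n := by
  intro n hn
  induction n using Nat.strong_induction_on with
  | _ n ih =>
    match n, hn with
    | 1, _ => exact h1
    | 2, _ => exact h2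
    | 3, _ => exact h3
    | n + 4, _ => exact step (n + 1) n.succ_pos (ih (n + 1) (by omega) n.succ_pos)

theorem sum_filter_pos_three_mul_lt_eq_sum_range {β : Type*} [AddCommMonoid β] (N : ℕ)
    (g : ℕ → β) :
    ∑ a ∈ (range N).filter (fun a => 0 < a ∧ 3 * a < N), g a =
      ∑ i ∈ range ((N - 1) / 3), g (i + 1) := by
  have hS : (range N).filter (fun a => 0 < a ∧ 3 * a < N) = Ico 1 ((N - 1) / 3 + 1) := by
    ext a; simp only [mem_filter, mem_range, mem_Ico]; omega
  rw [hS, sum_Ico_eq_sum_range, Nat.add_sub_cancel]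
  exact sum_congr rfl fun i _ => by rw [add_comm]

theorem sum_filter_three_mul_lt_add_six {β : Type*} [AddCommMonoid β] (f : ℕ → β) {N : ℕ}
    (hN : 0 < N) :
    ∑ a ∈ (range (N + 6)).filter (fun a => 0 < a ∧ 3 * a < N + 6), f (N + 6 - 3 * a) =
      ∑ a ∈ (range N).filter (fun a => 0 < a ∧ 3 * a < N), f (N - 3 * a) + f N + f (N + 3) := by
  rw [sum_filter_pos_three_mul_lt_eq_sum_range, sum_filter_pos_three_mul_lt_eq_sum_range,
    show (N + 6 - 1) / 3 = (N - 1) / 3 + 2 by omega, sum_range_succ', sum_range_succ']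
  congr 2
  exact sum_congr rfl fun i _ => congrArg f (by omega)

theorem Ik_congr {k L L' : ℕ} (M : ℕ) (h : ∀ t, Nat.Coprime t L ↔ Nat.Coprime t L') :
    Ik k L M = Ik k L' M := by
  unfold Ik
  exact sum_congr (filter_congr fun t _ => by rw [← Nat.Coprime, h t]) fun _ _ => rfl

theorem Jk_congr {k L L' : ℕ} (M : ℕ) (h : ∀ t, Nat.Coprime t L ↔ Nat.Coprime t L') :
    Jk k L M = Jk k L' M := by
  unfold Jk
  exact sum_congr (filter_congr fun t _ => by rw [← Nat.Coprime, h t]) fun _ _ => rfl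

theorem Ik_one_two_mul (k h : ℕ) : Ik k 1 (2 * h) = Ik k 2 (2 * h) + 2 ^ k * Ik k 1 h := by
  unfold Ik
  rw [sum_pow_filter_eq_odd_add_even]
  simp only [Nat.gcd_one_right, true_and, ← Nat.Prime.coprime_iff_not_dvd Nat.prime_two,
    Nat.coprime_comm, Nat.Coprime]

theorem Jk_one_two_mul (k h : ℕ) : Jk k 1 (2 * h) = Jk k 2 (2 * h) + 2 ^ k * Jk k 1 h := by
  unfold Jk
  rw [sum_pow_filter_eq_odd_add_even]
  simp only [Nat.gcd_one_right, true_and, ← Nat.Prime.coprime_iff_not_dvd Nat.prime_two,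
    Nat.coprime_comm, Nat.Coprime]
  congr 2
  · exact filter_congr fun t _ => by tauto
  · exact sum_congr (filter_congr fun t _ => by omega) fun _ _ => rfl

theorem Jk_one_two_mul_eq_sum_range (k h : ℕ) :
    Jk k 1 (2 * h) = ∑ t ∈ range h, if 0 < t ∧ (t + 2 * h) % 3 = 0 then t ^ k else 0 := by
  rw [← sum_filter]
  unfold Jk
  refine sum_congr ?_ fun _ _ => rfl
  ext t
  simp only [mem_filter, mem_range, Nat.gcd_one_right, true_and]
  omega

theorem Jk_one_add_six (k h : ℕ) (hh : 0 < h) : Jk k 1 (2 * h + 6) = Jk k 1 (2 * h) + h ^ k := by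
  rw [show 2 * h + 6 = 2 * (h + 3) by ring, Jk_one_two_mul_eq_sum_range,
    Jk_one_two_mul_eq_sum_range, sum_range_succ, sum_range_succ, sum_range_succ,
    if_pos ⟨hh, by omega⟩, if_neg (by omega), if_neg (by omega), add_zero, add_zero]
  congr 1
  exact sum_congr rfl fun t _ => by rw [show (t + 2 * (h + 3)) % 3 = (t + 2 * h) % 3 by omega]

theorem Ik_one_eq_sum_Ioc (k M : ℕ) : Ik k 1 M = ∑ t ∈ Ioc 0 ((M - 1) / 2), t ^ k := by
  unfold Ik
  refine sum_congr ?_ fun _ _ => rfl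
  ext t
  simp only [mem_filter, mem_range, mem_Ioc, Nat.gcd_one_right, and_true]
  omega

theorem Ik_zero_one (M : ℕ) : Ik 0 1 M = (M - 1) / 2 := by
  simp [Ik_one_eq_sum_Ioc]

theorem Ik_one_one_mul_two (M : ℕ) : Ik 1 1 M * 2 = (M - 1) / 2 * ((M - 1) / 2 + 1) := by
  have hsub : Ioc 0 ((M - 1) / 2) ⊆ range ((M - 1) / 2 + 1) := fun t ht => by
    simp only [mem_Ioc, mem_range] at ht ⊢; omega
  rw [Ik_one_eq_sum_Ioc, sum_subset hsub fun t ht hnt => ?_]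
  · simp only [pow_one]
    rw [sum_range_id_mul_two, Nat.add_sub_cancel, mul_comm]
  · simp only [mem_Ioc, mem_range, not_and, not_le] at ht hnt
    simp [show t = 0 by omega]

theorem Ik_gcd_add_Ik_half (k p a : ℕ) (ha : 3 * a < 2 * 2 ^ p) :
    Ik k (Nat.gcd a (2 * 2 ^ p)) (2 * 2 ^ p - 3 * a) +
        (if 2 ∣ a then 2 ^ k * Ik k 1 (2 ^ p - 3 * (a / 2)) else 0) =
      Ik k 1 (2 * 2 ^ p - 3 * a) := by
  split_ifs with h2
  · obtain ⟨b, rfl⟩ := h2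
    have hgcd : ∀ t, Nat.Coprime t (Nat.gcd (2 * b) (2 * 2 ^ p)) ↔ Nat.Coprime t 2 := fun t =>
      Nat.coprime_iff_coprime_of_dvd_pow
        ((Nat.gcd_dvd_right _ _).trans (pow_succ' 2 p).symm.dvd)
        (Nat.dvd_gcd (dvd_mul_right 2 b) (dvd_mul_right 2 _))
    rw [Ik_congr _ hgcd, Nat.mul_div_cancel_left b two_pos,
      show 2 * 2 ^ p - 3 * (2 * b) = 2 * (2 ^ p - 3 * b) by omega, Ik_one_two_mul]
  · have ha2 : Nat.Coprime a 2 := ((Nat.Prime.coprime_iff_not_dvd Nat.prime_two).2 h2).symm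
    rw [(ha2.mul_right (ha2.pow_right p) : Nat.gcd a (2 * 2 ^ p) = 1), add_zero]

theorem sum_Ik_gcd_add_sum_Ik_half (k p : ℕ) :
    ∑ a ∈ (range (2 * 2 ^ p)).filter (fun a => 0 < a ∧ 3 * a < 2 * 2 ^ p),
        Ik k (Nat.gcd a (2 * 2 ^ p)) (2 * 2 ^ p - 3 * a) +
      2 ^ k * ∑ a ∈ (range (2 ^ p)).filter (fun a => 0 < a ∧ 3 * a < 2 ^ p),
        Ik k 1 (2 ^ p - 3 * a) =
    ∑ a ∈ (range (2 * 2 ^ p)).filter (fun a => 0 < a ∧ 3 * a < 2 * 2 ^ p),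
        Ik k 1 (2 * 2 ^ p - 3 * a) := by
  rw [← sum_congr rfl fun a ha => Ik_gcd_add_Ik_half k p a (mem_filter.1 ha).2.2,
    sum_add_distrib, ← sum_filter, filter_filter, sum_filter_range_even, mul_sum,
    show (2 * 2 ^ p + 1) / 2 = 2 ^ p by omega]
  congr 1
  refine sum_congr (filter_congr fun a _ => by omega) fun a _ => ?_
  rw [Nat.mul_div_cancel_left a two_pos]

def coprimeSum (k N : ℕ) : ℕ :=
  Ik k N N + 2 * ∑ a ∈ (range N).filter (fun a => 0 < a ∧ 3 * a < N),
    Ik k (Nat.gcd a N) (N - 3 * a) + Jk k N N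

def fullSum (k N : ℕ) : ℕ :=
  Ik k 1 N + 2 * ∑ a ∈ (range N).filter (fun a => 0 < a ∧ 3 * a < N),
    Ik k 1 (N - 3 * a) + Jk k 1 N

theorem coprimeSum_add_fullSum_half (k p : ℕ) :
    coprimeSum k (2 * 2 ^ p) + 2 ^ k * fullSum k (2 ^ p) = fullSum k (2 * 2 ^ p) := by
  have hI : Ik k (2 * 2 ^ p) (2 * 2 ^ p) + 2 ^ k * Ik k 1 (2 ^ p) = Ik k 1 (2 * 2 ^ p) := by
    rw [Ik_one_two_mul, Ik_congr _ (coprime_two_mul_two_pow_iff p)]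
  have hJ : Jk k (2 * 2 ^ p) (2 * 2 ^ p) + 2 ^ k * Jk k 1 (2 ^ p) = Jk k 1 (2 * 2 ^ p) := by
    rw [Jk_one_two_mul, Jk_congr _ (coprime_two_mul_two_pow_iff p)]
  unfold coprimeSum fullSum
  rw [← hI, ← hJ, ← sum_Ik_gcd_add_sum_Ik_half]
  ring

theorem fullSum_two_mul_add_three (k h : ℕ) (hh : 0 < h) :
    fullSum k (2 * (h + 3)) = fullSum k (2 * h) + Ik k 1 (2 * h + 6) + Ik k 1 (2 * h) +
      2 * Ik k 1 (2 * h + 3) + h ^ k := by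
  unfold fullSum
  rw [mul_add, sum_filter_three_mul_lt_add_six (Ik k 1) (N := 2 * h) (by omega),
    Jk_one_add_six k h hh]
  ring

theorem cast_fullSum_zero_two_mul {ε : ℤ} (hε : ε = 1 ∨ ε = -1) :
    ∀ n : ℕ, 0 < n → 2 * (n : ℤ) ≡ ε [ZMOD 3] →
      (fullSum 0 (2 * n) : ℚ) = (4 * n ^ 2 - 4 * n - 1 - ε) / 6 := by
  unfold Int.ModEq
  refine Nat.rec_pos_step_three ?_ ?_ ?_ fun h hh ih => ?_
  · intro h3
    obtain rfl : ε = -1 := by omega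
    rw [show fullSum 0 (2 * 1) = 0 by decide]; norm_num
  · intro h3
    obtain rfl : ε = 1 := by omega
    rw [show fullSum 0 (2 * 2) = 1 by decide]; norm_num
  · intro h3; omega
  · intro h3
    have e6 : Ik 0 1 (2 * h + 6) = h + 2 := by rw [Ik_zero_one]; omega
    have e0 : Ik 0 1 (2 * h) + 1 = h := by rw [Ik_zero_one]; omega
    have e3 : Ik 0 1 (2 * h + 3) = h + 1 := by rw [Ik_zero_one]; omega
    qify at e6 e0 e3
    push_cast at h3
    rw [fullSum_two_mul_add_three 0 h hh]
    push_cast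
    rw [ih (by omega)]
    linear_combination e6 + e0 + 2 * e3

theorem cast_fullSum_one_two_mul {ε : ℤ} (hε : ε = 1 ∨ ε = -1) :
    ∀ n : ℕ, 0 < n → 2 * (n : ℤ) ≡ ε [ZMOD 3] →
      (fullSum 1 (2 * n) : ℚ) = (2 * n ^ 3 - 3 * n - ε) / 9 := by
  unfold Int.ModEq
  refine Nat.rec_pos_step_three ?_ ?_ ?_ fun h hh ih => ?_
  · intro h3
    obtain rfl : ε = -1 := by omega
    rw [show fullSum 1 (2 * 1) = 0 by decide]; norm_num
  · intro h3
    obtain rfl : ε = 1 := by omega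
    rw [show fullSum 1 (2 * 2) = 1 by decide]; norm_num
  · intro h3; omega
  · intro h3
    have e6 : Ik 1 1 (2 * h + 6) * 2 = (h + 2) * (h + 3) := by
      rw [Ik_one_one_mul_two, show (2 * h + 6 - 1) / 2 = h + 2 by omega]
    have e0 : Ik 1 1 (2 * h) * 2 + h = h * h := by
      obtain ⟨c, rfl⟩ : ∃ c, h = c + 1 := ⟨h - 1, by omega⟩
      rw [Ik_one_one_mul_two, show (2 * (c + 1) - 1) / 2 = c by omega]
      ring
    have e3 : Ik 1 1 (2 * h + 3) * 2 = (h + 1) * (h + 2) := by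
      rw [Ik_one_one_mul_two, show (2 * h + 3 - 1) / 2 = h + 1 by omega]
    qify at e6 e0 e3
    push_cast at h3
    rw [fullSum_two_mul_add_three 1 h hh]
    push_cast
    rw [ih (by omega)]
    linear_combination e6 / 2 + e0 / 2 + e3

theorem stmt_10 (m : ℕ) (hm : 2 ≤ m) :
    (tNum (2 ^ m) : ℚ) = (3 * 2 ^ (2 * m - 3) - 2 ^ (m - 1) - (-1 : ℚ) ^ m) / 3 ∧
    (lNum (2 ^ m) : ℚ) = (2 ^ (3 * m - 4) - (-1 : ℚ) ^ m) / 3 := by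
  obtain ⟨p, rfl⟩ : ∃ p, m = p + 2 := ⟨m - 2, by omega⟩
  have hε : (-1 : ℤ) ^ p = 1 ∨ (-1 : ℤ) ^ p = -1 := neg_one_pow_eq_or ℤ p
  have hε' : -(-1 : ℤ) ^ p = 1 ∨ -(-1 : ℤ) ^ p = -1 := by omega
  have h2 : (2 : ℤ) ≡ -1 [ZMOD 3] := by decide
  have hN : 2 * ((2 * 2 ^ p : ℕ) : ℤ) ≡ (-1) ^ p [ZMOD 3] := by
    push_cast; convert h2.pow (p + 2) using 1 <;> ring
  have hN' : 2 * ((2 ^ p : ℕ) : ℤ) ≡ -(-1) ^ p [ZMOD 3] := by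
    push_cast; convert h2.pow (p + 1) using 1 <;> ring
  have ht := coprimeSum_add_fullSum_half 0 (p + 1)
  have hl := coprimeSum_add_fullSum_half 1 (p + 1)
  rw [pow_succ' 2 p] at ht hl
  qify at ht hl
  rw [show 2 ^ (p + 2) = 2 * (2 * 2 ^ p) by ring, show tNum = coprimeSum 0 from rfl,
    show lNum = coprimeSum 1 from rfl]
  rw [show 2 * (p + 2) - 3 = 2 * p + 1 by omega, show p + 2 - 1 = p + 1 by omega,
    show 3 * (p + 2) - 4 = 3 * p + 2 by omega]
  constructor
  · rw [eq_sub_of_add_eq ht, cast_fullSum_zero_two_mul hε _ (by positivity) hN,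
      cast_fullSum_zero_two_mul hε' _ (by positivity) hN']
    push_cast
    ring
  · rw [eq_sub_of_add_eq hl, cast_fullSum_one_two_mul hε _ (by positivity) hN,
      cast_fullSum_one_two_mul hε' _ (by positivity) hN']
    push_cast
    ring
end

section
/- Let N = p^m where p > 3 is prime and m ≥ 1. Then ℓ_N = (p^{3m} − p^{3m−2})/36 + c, where c = (p−1)/9 if p ≡ 1 (mod 3), c = (p+1)/9 if p ≡ 2 (mod 3) and m odd, and c = −(p+1)/9 if p ≡ 2 (mod 3) and m even. -/
/-!
Dropping every coprimality condition from `ℓ_n` gives `lFull n`, a sum of plain arithmetic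
progressions; on each odd class mod 6 it is a polynomial in `n`, namely
`36 · lFull n = n³ + 3n − 4 χ(n)` with `χ` the nontrivial character mod 3.
For `N = p^m` the integers not coprime to `N`, or to `gcd(a, N)` when `p ∣ a`, are exactly the
multiples of `p`, and removing them rescales each sum from level `N` to level `N / p`. This gives
`ℓ_N = lFull N − p · lFull (N / p)`, and substituting the polynomial closes the computation.
-/

open Finset

def boundedSum (d : ℕ) (P : ℕ → Prop) [DecidablePred P] (f : ℕ → ℕ) (n : ℕ) : ℕ :=
  ∑ t ∈ (range n).filter (fun t => 0 < t ∧ d * t < n ∧ P t), f t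

section boundedSum

variable {d : ℕ} {P Q : ℕ → Prop} [DecidablePred P] [DecidablePred Q] {f g : ℕ → ℕ}

lemma boundedSum_congr {n : ℕ} (hPQ : ∀ t, 0 < t → d * t < n → (P t ↔ Q t))
    (hfg : ∀ t, 0 < t → d * t < n → Q t → f t = g t) :
    boundedSum d P f n = boundedSum d Q g n := by
  refine sum_congr (filter_congr fun t _ => ?_) fun t ht => ?_
  · exact and_congr_right fun h0 => and_congr_right fun hd => hPQ t h0 hd
  · simp only [mem_filter] at ht
    exact hfg t ht.2.1 ht.2.2.1 ht.2.2.2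

lemma boundedSum_true (n : ℕ) :
    boundedSum d (fun _ => True) f n =
      ∑ t ∈ (range n).filter (fun t => 0 < t ∧ d * t < n), f t := by
  simp only [boundedSum, and_true]

lemma boundedSum_add (n : ℕ) :
    boundedSum d P f n + boundedSum d P g n = boundedSum d P (fun t => f t + g t) n :=
  sum_add_distrib.symm

lemma boundedSum_mul_left (c n : ℕ) :
    boundedSum d P (fun t => c * f t) n = c * boundedSum d P f n :=
  (mul_sum _ _ _).symm

lemma boundedSum_mul_split {p : ℕ} (hp : 0 < p) (μ : ℕ) :
    boundedSum d P f (p * μ) =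
      boundedSum d (fun t => P t ∧ ¬ p ∣ t) f (p * μ) +
        boundedSum d (fun s => P (p * s)) (fun s => f (p * s)) μ := by
  unfold boundedSum
  rw [← sum_filter_add_sum_filter_not _ (fun t => ¬ p ∣ t), filter_filter, filter_filter]
  congr 1
  · simp only [and_assoc]
  · symm
    refine sum_nbij' (p * ·) (· / p) ?_ ?_ ?_ ?_ fun s _ => rfl
    · intro s hs
      simp only [mem_filter, mem_range, not_not] at hs ⊢
      obtain ⟨hsμ, hs0, hds, hPs⟩ := hs
      refine ⟨Nat.mul_lt_mul_of_pos_left hsμ hp, ⟨Nat.mul_pos hp hs0, ?_, hPs⟩,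
        dvd_mul_right p s⟩
      rw [mul_left_comm]
      exact Nat.mul_lt_mul_of_pos_left hds hp
    · rintro t ht
      simp only [mem_filter, mem_range, not_not] at ht ⊢
      obtain ⟨htμ, ⟨ht0, hdt, hPt⟩, s, rfl⟩ := ht
      rw [Nat.mul_div_cancel_left s hp]
      rw [mul_left_comm] at hdt
      exact ⟨Nat.lt_of_mul_lt_mul_left htμ, Nat.pos_of_mul_pos_left ht0,
        Nat.lt_of_mul_lt_mul_left hdt, hPt⟩
    · intro s _
      exact Nat.mul_div_cancel_left s hp
    · rintro t ht
      simp only [mem_filter, not_not] at ht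
      exact Nat.mul_div_cancel' ht.2.2

end boundedSum

-- `halfSum n = I₁(1, n)`, `halfSumCong n = J₁(1, n)`, and `lFull n` is `ℓ_n` with every `gcd`
-- condition dropped.
def halfSum (n : ℕ) : ℕ := boundedSum 2 (fun _ => True) id n

def halfSumCong (n : ℕ) : ℕ := boundedSum 2 (fun t => (t + n) % 3 = 0) id n

def shiftedHalfSum (n : ℕ) : ℕ := boundedSum 3 (fun _ => True) (fun a => halfSum (n - 3 * a)) n

def lFull (n : ℕ) : ℕ := halfSum n + 2 * shiftedHalfSum n + halfSumCong n

lemma Ik_one_eq (L n : ℕ) : Ik 1 L n = boundedSum 2 (fun t => t.gcd L = 1) id n :=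
  sum_congr rfl fun t _ => pow_one t

lemma Jk_one_eq (L n : ℕ) :
    Jk 1 L n = boundedSum 2 (fun t => t.gcd L = 1 ∧ (t + n) % 3 = 0) id n :=
  sum_congr rfl fun t _ => pow_one t

lemma Ik_one_one (n : ℕ) : Ik 1 1 n = halfSum n := by
  rw [Ik_one_eq]
  exact boundedSum_congr (fun t _ _ => by simp) fun _ _ _ _ => rfl

lemma gcd_eq_one_iff_not_dvd {p m L : ℕ} (hp : p.Prime) (hL : L ∣ p ^ m) (hpL : p ∣ L)
    (t : ℕ) :
    t.gcd L = 1 ↔ ¬ p ∣ t := by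
  obtain ⟨i, -, rfl⟩ := (Nat.dvd_prime_pow hp).1 hL
  have hi : 0 < i := Nat.pos_of_ne_zero fun h => hp.not_dvd_one (by simpa [h] using hpL)
  rw [← Nat.Coprime, Nat.coprime_pow_right_iff hi, Nat.coprime_comm, hp.coprime_iff_not_dvd]

lemma Ik_one_add_mul_halfSum {p L : ℕ} (hp : 0 < p) (hL : ∀ t, t.gcd L = 1 ↔ ¬ p ∣ t)
    (μ : ℕ) :
    Ik 1 L (p * μ) + p * halfSum μ = halfSum (p * μ) := by
  rw [Ik_one_eq, halfSum, halfSum, boundedSum_mul_split (P := fun _ => True) hp μ,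
    ← boundedSum_mul_left]
  congr 1
  exact boundedSum_congr (fun t _ _ => by simp [hL]) fun _ _ _ _ => rfl

lemma Jk_one_add_mul_halfSumCong {p L : ℕ} (hp : 0 < p) (hp3 : ¬ 3 ∣ p)
    (hL : ∀ t, t.gcd L = 1 ↔ ¬ p ∣ t) (μ : ℕ) :
    Jk 1 L (p * μ) + p * halfSumCong μ = halfSumCong (p * μ) := by
  rw [Jk_one_eq, halfSumCong, halfSumCong,
    boundedSum_mul_split (P := fun t => (t + p * μ) % 3 = 0) hp μ, ← boundedSum_mul_left]
  congr 1
  · exact boundedSum_congr (fun t _ _ => by rw [hL, and_comm]) fun _ _ _ _ => rfl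
  · refine boundedSum_congr (fun s _ _ => ?_) fun _ _ _ _ => rfl
    rw [← Nat.mul_add, ← Nat.dvd_iff_mod_eq_zero, ← Nat.dvd_iff_mod_eq_zero,
      Nat.prime_three.dvd_mul, or_iff_right hp3]

lemma sum_Ik_gcd_add_mul_shiftedHalfSum {p m : ℕ} (hp : p.Prime) (hm : 1 ≤ m) :
    ∑ a ∈ (range (p ^ m)).filter (fun a => 0 < a ∧ 3 * a < p ^ m),
        Ik 1 (a.gcd (p ^ m)) (p ^ m - 3 * a) + p * shiftedHalfSum (p ^ (m - 1)) =
      shiftedHalfSum (p ^ m) := by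
  have hN : p ^ m = p * p ^ (m - 1) := by rw [← pow_succ', Nat.sub_add_cancel hm]
  rw [← boundedSum_true (d := 3), shiftedHalfSum, shiftedHalfSum, hN]
  conv_lhs => rw [boundedSum_mul_split hp.pos, add_assoc, ← boundedSum_mul_left, boundedSum_add]
  conv_rhs => rw [boundedSum_mul_split hp.pos]
  congr 1
  · refine boundedSum_congr (fun _ _ _ => Iff.rfl) fun a _ _ ha => ?_
    rw [← hN, Nat.Coprime.pow_right m ((hp.coprime_iff_not_dvd.2 ha.2).symm), Ik_one_one]
  · refine boundedSum_congr (fun _ _ _ => Iff.rfl) fun c _ _ _ => ?_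
    rw [mul_left_comm, ← Nat.mul_sub]
    refine Ik_one_add_mul_halfSum hp.pos (gcd_eq_one_iff_not_dvd (m := m) hp ?_ ?_) _
    · rw [← hN]; exact Nat.gcd_dvd_right _ _
    · exact Nat.dvd_gcd (dvd_mul_right p c) (dvd_mul_right p _)

lemma lNum_add_mul_lFull {p m : ℕ} (hp : p.Prime) (hp3 : ¬ 3 ∣ p) (hm : 1 ≤ m) :
    lNum (p ^ m) + p * lFull (p ^ (m - 1)) = lFull (p ^ m) := by
  have hN : p ^ m = p * p ^ (m - 1) := by rw [← pow_succ', Nat.sub_add_cancel hm]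
  have hL := gcd_eq_one_iff_not_dvd hp (dvd_refl (p ^ m)) (dvd_pow_self p (by omega))
  have hI := Ik_one_add_mul_halfSum hp.pos hL (p ^ (m - 1))
  have hJ := Jk_one_add_mul_halfSumCong hp.pos hp3 hL (p ^ (m - 1))
  have hA := sum_Ik_gcd_add_mul_shiftedHalfSum hp hm
  rw [← hN] at hI hJ
  rw [lNum, lFull, lFull, ← hI, ← hJ, ← hA]
  ring

lemma halfSum_eq {n h : ℕ} (hn : n = 2 * h + 1 ∨ n = 2 * h + 2) :
    (halfSum n : ℚ) = h * (h + 1) / 2 := by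
  have hset :
      (range n).filter (fun t => 0 < t ∧ 2 * t < n) = (range (h + 1)).filter (0 < ·) := by
    ext t
    simp only [mem_filter, mem_range]
    omega
  have hgauss := sum_range_id_mul_two (h + 1)
  rw [← sum_filter_of_ne (p := (0 < ·)) fun t _ ht => Nat.pos_of_ne_zero ht, ← hset,
    ← boundedSum_true] at hgauss
  have hcast : (halfSum n : ℚ) * 2 = (h + 1) * h := by exact_mod_cast hgauss
  linarith

lemma shiftedHalfSum_eq_sum {q r : ℕ} (hr : 0 < r) (hr3 : r ≤ 3) :
    shiftedHalfSum (3 * q + r) = ∑ i ∈ range q, halfSum (3 * i + r) := by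
  rw [shiftedHalfSum, boundedSum_true]
  refine sum_nbij' (q - ·) (q - ·) ?_ ?_ ?_ ?_ ?_ <;> intro a ha <;>
    simp only [mem_filter, mem_range] at ha ⊢
  all_goals first | omega | congr 1; omega

lemma shiftedHalfSum_six_mul_add_one (k : ℕ) :
    (shiftedHalfSum (6 * k + 1) : ℚ) = (6 * k ^ 3 - 3 * k ^ 2 - k) / 2 := by
  rw [show 6 * k + 1 = 3 * (2 * k) + 1 by ring, shiftedHalfSum_eq_sum one_pos (by norm_num)]
  push_cast
  induction k with
  | zero => simp
  | succ k ih =>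
    rw [show 2 * (k + 1) = 2 * k + 1 + 1 by ring, sum_range_succ, sum_range_succ, ih,
      halfSum_eq (h := 3 * k) (by omega), halfSum_eq (h := 3 * k + 1) (by omega)]
    push_cast
    ring

lemma shiftedHalfSum_six_mul_add_five (k : ℕ) :
    (shiftedHalfSum (6 * k + 5) : ℚ) = (6 * k ^ 3 + 9 * k ^ 2 + 3 * k) / 2 := by
  rw [show 6 * k + 5 = 3 * (2 * k + 1) + 2 by ring, shiftedHalfSum_eq_sum two_pos (by norm_num)]
  push_cast
  induction k with
  | zero => simp [halfSum_eq (n := 2) (h := 0) (by omega)]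
  | succ k ih =>
    rw [show 2 * (k + 1) + 1 = 2 * k + 1 + 1 + 1 by ring, sum_range_succ, sum_range_succ, ih,
      halfSum_eq (h := 3 * k + 2) (by omega), halfSum_eq (h := 3 * k + 3) (by omega)]
    push_cast
    ring

lemma halfSumCong_six_mul_add_one (k : ℕ) :
    halfSumCong (6 * k + 1) = ∑ j ∈ range k, (3 * j + 2) := by
  unfold halfSumCong boundedSum
  refine sum_nbij' (· / 3) (3 * · + 2) ?_ ?_ ?_ ?_ ?_ <;> intro t ht <;>
    simp only [mem_filter, mem_range, id] at ht ⊢ <;> omega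

lemma halfSumCong_six_mul_add_five (k : ℕ) :
    halfSumCong (6 * k + 5) = ∑ j ∈ range (k + 1), (3 * j + 1) := by
  unfold halfSumCong boundedSum
  refine sum_nbij' (· / 3) (3 * · + 1) ?_ ?_ ?_ ?_ ?_ <;> intro t ht <;>
    simp only [mem_filter, mem_range, id] at ht ⊢ <;> omega

lemma sum_range_three_mul_add (c : ℚ) (k : ℕ) :
    ∑ j ∈ range k, (3 * (j : ℚ) + c) = (3 * k ^ 2 + (2 * c - 3) * k) / 2 := by
  induction k with
  | zero => simp
  | succ k ih =>
    rw [sum_range_succ, ih]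
    push_cast
    ring

lemma lFull_six_mul_add_one (k : ℕ) :
    36 * (lFull (6 * k + 1) : ℚ) = (6 * k + 1) ^ 3 + 3 * (6 * k + 1) - 4 := by
  have hJ := congrArg (Nat.cast : ℕ → ℚ) (halfSumCong_six_mul_add_one k)
  push_cast at hJ
  rw [lFull, Nat.cast_add, Nat.cast_add, Nat.cast_mul, hJ, sum_range_three_mul_add,
    shiftedHalfSum_six_mul_add_one, halfSum_eq (h := 3 * k) (by omega)]
  push_cast
  ring

lemma lFull_six_mul_add_five (k : ℕ) :
    36 * (lFull (6 * k + 5) : ℚ) = (6 * k + 5) ^ 3 + 3 * (6 * k + 5) + 4 := by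
  have hJ := congrArg (Nat.cast : ℕ → ℚ) (halfSumCong_six_mul_add_five k)
  push_cast at hJ
  rw [lFull, Nat.cast_add, Nat.cast_add, Nat.cast_mul, hJ, sum_range_three_mul_add,
    shiftedHalfSum_six_mul_add_five, halfSum_eq (h := 3 * k + 2) (by omega)]
  push_cast
  ring

-- The character mod 3 on `n` prime to 3; its value `-1` at multiples of 3 is junk.
def chi3 (n : ℕ) : ℚ := if n % 3 = 1 then 1 else -1

lemma lFull_eq {n : ℕ} (h2 : ¬ 2 ∣ n) (h3 : ¬ 3 ∣ n) :
    36 * (lFull n : ℚ) = n ^ 3 + 3 * n - 4 * chi3 n := by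
  obtain ⟨k, rfl | rfl⟩ : ∃ k, n = 6 * k + 1 ∨ n = 6 * k + 5 := ⟨n / 6, by omega⟩
  · rw [lFull_six_mul_add_one, chi3, if_pos (by omega)]
    push_cast
    ring
  · rw [lFull_six_mul_add_five, chi3, if_neg (by omega)]
    push_cast
    ring

lemma chi3_mul {a b : ℕ} (ha : ¬ 3 ∣ a) (hb : ¬ 3 ∣ b) :
    chi3 (a * b) = chi3 a * chi3 b := by
  unfold chi3
  rw [Nat.mul_mod]
  rcases (by omega : a % 3 = 1 ∨ a % 3 = 2) with ha' | ha' <;>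
    rcases (by omega : b % 3 = 1 ∨ b % 3 = 2) with hb' | hb' <;> simp [ha', hb']

lemma chi3_pow {a : ℕ} (ha : ¬ 3 ∣ a) (k : ℕ) : chi3 (a ^ k) = chi3 a ^ k := by
  induction k with
  | zero => simp [chi3]
  | succ k ih =>
    rw [pow_succ, chi3_mul (fun h => ha (Nat.prime_three.dvd_of_dvd_pow h)) ha, ih, pow_succ]

lemma mul_chi3_pow_pred_sub_chi3_pow {p m : ℕ} (hp3 : ¬ 3 ∣ p) (hm : 1 ≤ m) :
    ((p : ℚ) * chi3 (p ^ (m - 1)) - chi3 (p ^ m)) / 9 =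
      if p % 3 = 1 then ((p : ℚ) - 1) / 9
      else if Odd m then ((p : ℚ) + 1) / 9 else -(((p : ℚ) + 1) / 9) := by
  obtain ⟨m, rfl⟩ : ∃ k, m = k + 1 := ⟨m - 1, by omega⟩
  rw [Nat.add_sub_cancel, chi3_pow hp3, chi3_pow hp3, chi3]
  split_ifs with h1 hodd
  · simp
  · have hm : Even m := by rwa [Nat.odd_add_one, Nat.not_odd_iff_even] at hodd
    rw [pow_succ, hm.neg_one_pow]
    ring
  · have hm : Odd m := by rwa [Nat.odd_add_one, not_not] at hodd
    rw [pow_succ, hm.neg_one_pow]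
    ring

theorem stmt_13 (p m : ℕ) (hp : p.Prime) (hp3 : 3 < p) (hm : 1 ≤ m) :
    (lNum (p ^ m) : ℚ) =
      ((p : ℚ) ^ (3 * m) - (p : ℚ) ^ (3 * m - 2)) / 36 +
        (if p % 3 = 1 then ((p : ℚ) - 1) / 9
         else if Odd m then ((p : ℚ) + 1) / 9 else -(((p : ℚ) + 1) / 9)) := by
  have not_dvd_pow {q : ℕ} (hq : q.Prime) (hqp : q < p) (k : ℕ) : ¬ q ∣ p ^ k := fun h =>
    hqp.ne ((Nat.prime_dvd_prime_iff_eq hq hp).1 (hq.dvd_of_dvd_pow h))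
  have h3p : ¬ 3 ∣ p := by simpa using not_dvd_pow Nat.prime_three hp3 1
  have hcount : (lNum (p ^ m) : ℚ) + p * lFull (p ^ (m - 1)) = lFull (p ^ m) := by
    exact_mod_cast lNum_add_mul_lFull hp h3p hm
  have hLN := lFull_eq (not_dvd_pow Nat.prime_two (by omega) m)
    (not_dvd_pow Nat.prime_three hp3 m)
  have hLM := lFull_eq (not_dvd_pow Nat.prime_two (by omega) (m - 1))
    (not_dvd_pow Nat.prime_three hp3 (m - 1))
  have h3m : (p : ℚ) ^ (3 * m) = p ^ 3 * (p ^ (m - 1)) ^ 3 := by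
    rw [← pow_mul, ← pow_add]
    congr 1
    omega
  have h3m2 : (p : ℚ) ^ (3 * m - 2) = p * (p ^ (m - 1)) ^ 3 := by
    rw [← pow_mul, ← pow_succ']
    congr 1
    omega
  have hpm : (p : ℚ) ^ m = p * p ^ (m - 1) := by rw [← pow_succ', Nat.sub_add_cancel hm]
  rw [← mul_chi3_pow_pred_sub_chi3_pow h3p hm, h3m, h3m2]
  push_cast at hLN hLM
  rw [hpm] at hLN
  linear_combination hcount + hLN / 36 - p * hLM / 36
end

section
/- Let p^m be a prime power. Then Σ_{0<a<p^m/3} Σ_{0<k<(p^m−3a)/2, gcd(a,k,p^m)=1} k = Σ_{0<a<p^m/3} Σ_{0<k<(p^m−3a)/2} k − p·Σ_{0<a<p^{m−1}/3} Σ_{0<k<(p^{m−1}−3a)/2} k. -/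
/-!
Both sides sum `k` over the lattice points of the triangle `a, k > 0`, `3a + 2k < p^m`. A point is
dropped on the left exactly when `p ∣ a` and `p ∣ k`, and these points are `p` times the lattice
points of the triangle `3a + 2k < p^(m-1)`, so they carry `p` times its weighted count.
-/

open Finset

namespace Triangle

def outerIdx (N : ℕ) : Finset ℕ := (range N).filter (fun a => 0 < a ∧ 3 * a < N)

def innerIdx (N a : ℕ) : Finset ℕ := (range N).filter (fun k => 0 < k ∧ 2 * k < N - 3 * a)

def kSum (N : ℕ) : ℤ := ∑ a ∈ outerIdx N, ∑ k ∈ innerIdx N a, (k : ℤ)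

variable {p : ℕ}

theorem filter_range_mul_dvd (hp : 0 < p) (N : ℕ) (P : ℕ → Prop) [DecidablePred P] :
    ((range (p * N)).filter P).filter (p ∣ ·) =
      ((range N).filter (fun k => P (p * k))).image (p * ·) := by
  ext k
  simp only [mem_filter, mem_range, mem_image]
  constructor
  · rintro ⟨⟨hk, hP⟩, c, rfl⟩
    exact ⟨c, ⟨Nat.lt_of_mul_lt_mul_left hk, hP⟩, rfl⟩
  · rintro ⟨c, ⟨hc, hP⟩, rfl⟩
    exact ⟨⟨Nat.mul_lt_mul_of_pos_left hc hp, hP⟩, c, rfl⟩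

theorem outerIdx_mul_filter_dvd (hp : 0 < p) (N : ℕ) :
    (outerIdx (p * N)).filter (p ∣ ·) = (outerIdx N).image (p * ·) := by
  rw [outerIdx, filter_range_mul_dvd hp, outerIdx]
  congr 1
  refine filter_congr fun a _ => ?_
  rw [Nat.mul_pos_iff_of_pos_left hp, mul_left_comm, Nat.mul_lt_mul_left hp]

theorem innerIdx_mul_filter_dvd (hp : 0 < p) (N b : ℕ) :
    (innerIdx (p * N) (p * b)).filter (p ∣ ·) = (innerIdx N b).image (p * ·) := by
  rw [innerIdx, filter_range_mul_dvd hp, innerIdx]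
  congr 1
  refine filter_congr fun k _ => ?_
  rw [Nat.mul_pos_iff_of_pos_left hp, mul_left_comm, mul_left_comm 3, ← Nat.mul_sub,
    Nat.mul_lt_mul_left hp]

theorem sum_dvd_dvd_eq_mul_kSum (hp : 0 < p) (N : ℕ) :
    ∑ a ∈ outerIdx (p * N), ∑ k ∈ (innerIdx (p * N) a).filter (fun k => p ∣ a ∧ p ∣ k),
      (k : ℤ) = p * kSum N := by
  have hinj : Function.Injective (p * ·) := fun x y h => Nat.eq_of_mul_eq_mul_left hp h
  calc _ = ∑ a ∈ (outerIdx (p * N)).filter (p ∣ ·),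
          ∑ k ∈ (innerIdx (p * N) a).filter (p ∣ ·), (k : ℤ) := by
        rw [sum_filter]
        refine sum_congr rfl fun a _ => ?_
        by_cases ha : p ∣ a <;> simp [ha]
    _ = ∑ b ∈ outerIdx N, ∑ l ∈ innerIdx N b, ((p * l : ℕ) : ℤ) := by
        rw [outerIdx_mul_filter_dvd hp, sum_image hinj.injOn]
        refine sum_congr rfl fun b _ => ?_
        rw [innerIdx_mul_filter_dvd hp, sum_image hinj.injOn]
    _ = p * kSum N := by
        simp only [kSum, mul_sum, Nat.cast_mul]

theorem kSum_mul_eq (hp : 0 < p) (N : ℕ) :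
    kSum (p * N) =
      ∑ a ∈ outerIdx (p * N),
        ∑ k ∈ (innerIdx (p * N) a).filter (fun k => ¬(p ∣ a ∧ p ∣ k)), (k : ℤ) + p * kSum N := by
  rw [← sum_dvd_dvd_eq_mul_kSum hp, ← sum_add_distrib, kSum]
  exact sum_congr rfl fun a _ => (sum_filter_not_add_sum_filter _ _ _).symm

end Triangle

theorem Nat.Prime.gcd_gcd_pow_eq_one_iff {p m : ℕ} (hp : p.Prime) (hm : 1 ≤ m) (a k : ℕ) :
    Nat.gcd (Nat.gcd a k) (p ^ m) = 1 ↔ ¬(p ∣ a ∧ p ∣ k) := by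
  rw [← Nat.Coprime, Nat.coprime_pow_right_iff hm, Nat.coprime_comm, hp.coprime_iff_not_dvd,
    Nat.dvd_gcd_iff]

open Triangle in
theorem stmt_14 (p m : ℕ) (hp : p.Prime) (hm : 1 ≤ m) :
    (∑ a ∈ (Finset.range (p ^ m)).filter (fun a => 0 < a ∧ 3 * a < p ^ m),
      ∑ k ∈ (Finset.range (p ^ m)).filter
        (fun k => 0 < k ∧ 2 * k < p ^ m - 3 * a ∧ Nat.gcd (Nat.gcd a k) (p ^ m) = 1), (k : ℤ)) =
    (∑ a ∈ (Finset.range (p ^ m)).filter (fun a => 0 < a ∧ 3 * a < p ^ m),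
      ∑ k ∈ (Finset.range (p ^ m)).filter
        (fun k => 0 < k ∧ 2 * k < p ^ m - 3 * a), (k : ℤ)) -
    (p : ℤ) *
    (∑ a ∈ (Finset.range (p ^ (m - 1))).filter (fun a => 0 < a ∧ 3 * a < p ^ (m - 1)),
      ∑ k ∈ (Finset.range (p ^ (m - 1))).filter
        (fun k => 0 < k ∧ 2 * k < p ^ (m - 1) - 3 * a), (k : ℤ)) := by
  change _ = kSum (p ^ m) - p * kSum (p ^ (m - 1))
  have hsplit := kSum_mul_eq hp.pos (p ^ (m - 1))
  rw [← pow_succ', Nat.sub_add_cancel hm] at hsplit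
  rw [hsplit, add_sub_cancel_right]
  refine sum_congr rfl fun a _ => sum_congr ?_ fun _ _ => rfl
  rw [innerIdx, filter_filter]
  exact filter_congr fun k _ => by rw [hp.gcd_gcd_pow_eq_one_iff hm, and_assoc]
end
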